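/- arXiv:2102.06616 — 3 statements merged into one kernel-verified Lean document; each statement's English description precedes it below -/
import Mathlib

section
/- Let n be a positive integer and define the (n+1)×(n+1) matrix A over the option type (star or integer) by: a_{i,j} = star if j ≤ i; a_{0,j} = j-1 for j > 0; and a_{i,j} = a_{i-1,j} + (n - i) for 0 < i < j. Then the integer entries of A are exactly the integers 0, 1, ..., n(n+1)/2 - 1, each appearing exactly once. -/
/-- A generalized placement delivery array predicate: an `F × Kc` array
(entries `none` = star, `some s` = integer) whose integer alphabet is `[lo, hi)`,
satisfying: C1 (exactly `Z` stars per column), all integers lie in `[lo, hi)`,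
C2 (every integer in `[lo, hi)` appears), and C3. -/
def isPDAgen (Kc F Z lo hi : ℕ) (P : ℕ → ℕ → Option ℕ) : Prop :=
  (∀ j < Kc, ((Finset.range F).filter (fun i => P i j = none)).card = Z) ∧
  (∀ i < F, ∀ j < Kc, ∀ s : ℕ, P i j = some s → lo ≤ s ∧ s < hi) ∧
  (∀ s : ℕ, lo ≤ s → s < hi → ∃ i < F, ∃ j < Kc, P i j = some s) ∧
  (∀ i₁ j₁ i₂ j₂ s, i₁ < F → j₁ < Kc → i₂ < F → j₂ < Kc →
    P i₁ j₁ = some s → P i₂ j₂ = some s → (i₁, j₁) ≠ (i₂, j₂) →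
    i₁ ≠ i₂ ∧ j₁ ≠ j₂ ∧ P i₁ j₂ = none ∧ P i₂ j₁ = none)

/-- A `(Kc, F, Z, S)` PDA with integer alphabet `[0, S)`. -/
def isPDA (Kc F Z S : ℕ) (P : ℕ → ℕ → Option ℕ) : Prop :=
  isPDAgen Kc F Z 0 S P

/-- `g`-regularity on alphabet `[lo, hi)`: each integer appears exactly `g` times. -/
def isRegularGen (g Kc F lo hi : ℕ) (P : ℕ → ℕ → Option ℕ) : Prop :=
  ∀ s : ℕ, lo ≤ s → s < hi →
    (((Finset.range F) ×ˢ (Finset.range Kc)).filter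
      (fun p => P p.1 p.2 = some s)).card = g

/-- `t`-cyclic: in each column the `Z` stars occupy (cyclically) consecutive rows,
and each column's starting star position is the previous column's shifted down by `t`. -/
def isCyclic (t Kc F Z : ℕ) (P : ℕ → ℕ → Option ℕ) : Prop :=
  ∃ start : ℕ → ℕ,
    (∀ j < Kc, ∀ i < F, (P i j = none ↔ ∃ r < Z, i = (start j + r) % F)) ∧
    (∀ j : ℕ, j + 1 < Kc → start (j + 1) % F = (start j + t) % F)

/-- The integer values of the matrix `A` of procedure 1:
`aVal n 0 j = j - 1` and `aVal n (i+1) j = aVal n i j + (n - (i+1))`. -/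
def aVal (n : ℕ) : ℕ → ℕ → ℕ
  | 0, j => j - 1
  | i + 1, j => aVal n i j + (n - (i + 1))

/-- The `(n+1) × (n+1)` matrix `A` of procedure 1: stars on and below the
diagonal, integers `aVal n i j` above it. -/
def Amat (n i j : ℕ) : Option ℕ :=
  if j ≤ i then none else some (aVal n i j)

/-- The block matrix `P₁` of procedure 2, with `b` row/column blocks of size
`n+1`: block `A` when the column block equals the row block, `Aᵀ` when the
column block is the row block plus one (mod `b`), and all-star otherwise. -/
def P1mat (n b i j : ℕ) : Option ℕ :=
  if j / (n + 1) = i / (n + 1) then Amat n (i % (n + 1)) (j % (n + 1))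
  else if j / (n + 1) = (i / (n + 1) + 1) % b then Amat n (j % (n + 1)) (i % (n + 1))
  else none

/-- The `K × (K/k)` matrix `P̃₁` of procedure 3: each row of `P₁` is expanded
into `k` rows, with integer entries incremented by `S₁ = (K-kL)(K-kL+k)/(2k²)`
from one row to the next. -/
def Ptilde1 (K k L i j : ℕ) : Option ℕ :=
  (P1mat ((K - k * L) / k) (K / (K - k * L + k)) (i / k) j).map
    (fun s => s + (i % k) * ((K - k * L) * (K - k * L + k) / (2 * k ^ 2)))

/-- The `K × K` matrix `P` of procedure 4: concatenation of
`P̃₁, P̃₁ + S̃₁, …, P̃₁ + (k-1)S̃₁` where `S̃₁ = (K-kL)(K-kL+k)/(2k)`. -/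
def Pfull (K k L i j : ℕ) : Option ℕ :=
  (Ptilde1 K k L i (j % (K / k))).map
    (fun s => s + (j / (K / k)) * ((K - k * L) * (K - k * L + k) / (2 * k)))

/-!
Row `i` of `A` holds the consecutive integers `rowStart n i, …, rowStart n (i + 1) - 1`, where
`rowStart n i = n + (n - 1) + ⋯ + (n - i + 1)`. So the rows tile `[0, n(n+1)/2)` by consecutive
blocks of lengths `n, n - 1, …, 1`: every integer of that range lies in exactly one block, and
within its block it determines its column.
-/

open Finset

section MonotoneBlocks

variable {β : Type*}

lemma Monotone.exists_le_lt_succ [LinearOrder β] {f : ℕ → β} (hf : Monotone f) {s : β}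
    (h0 : f 0 ≤ s) : ∀ {m : ℕ}, s < f m → ∃ i < m, f i ≤ s ∧ s < f (i + 1)
  | 0, hm => absurd h0 (not_le.2 hm)
  | m + 1, hm => by
    by_cases h : f m ≤ s
    · exact ⟨m, m.lt_succ_self, h, hm⟩
    · obtain ⟨i, hi, hfi⟩ := hf.exists_le_lt_succ h0 (not_le.1 h)
      exact ⟨i, hi.trans m.lt_succ_self, hfi⟩

lemma Monotone.eq_of_le_lt_succ [Preorder β] {f : ℕ → β} (hf : Monotone f) {s : β}
    {i i' : ℕ} (hi : f i ≤ s ∧ s < f (i + 1)) (hi' : f i' ≤ s ∧ s < f (i' + 1)) : i = i' := by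
  by_contra hne
  rcases Nat.lt_or_gt_of_ne hne with h | h
  · exact (hi.2.trans_le (hf h)).not_ge hi'.1
  · exact (hi'.2.trans_le (hf h)).not_ge hi.1

end MonotoneBlocks

def rowStart (n i : ℕ) : ℕ := ∑ t ∈ range i, (n - t)

lemma rowStart_succ (n i : ℕ) : rowStart n (i + 1) = rowStart n i + (n - i) :=
  sum_range_succ _ _

lemma rowStart_monotone (n : ℕ) : Monotone (rowStart n) :=
  monotone_nat_of_le_succ fun i => by simp only [rowStart_succ, le_add_iff_nonneg_right, zero_le]

lemma rowStart_self (n : ℕ) : rowStart n n = n * (n + 1) / 2 := by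
  have hreflect : rowStart n n = ∑ t ∈ range (n + 1), t := by
    rw [rowStart, ← sum_range_reflect, sum_range_succ']
    exact sum_congr rfl fun t ht => by have := mem_range.1 ht; omega
  have hgauss := sum_range_id_mul_two (n + 1)
  rw [Nat.add_sub_cancel] at hgauss
  rw [hreflect, mul_comm n, ← hgauss, Nat.mul_div_cancel _ two_pos]

lemma aVal_eq_rowStart_add {n i j : ℕ} (hij : i < j) (hjn : j ≤ n) :
    aVal n i j = rowStart n i + (j - (i + 1)) := by
  induction i with
  | zero => simp [aVal, rowStart]
  | succ i ih =>
    rw [aVal, ih (by omega), rowStart_succ]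
    omega

lemma Amat_eq_some_iff {n i j s : ℕ} (hjn : j ≤ n) :
    Amat n i j = some s ↔ i < j ∧ rowStart n i + (j - (i + 1)) = s := by
  unfold Amat
  split_ifs with hji
  · simp only [false_iff, not_and]
    omega
  · rw [Option.some.injEq, aVal_eq_rowStart_add (not_le.1 hji) hjn]
    exact ⟨fun h => ⟨not_le.1 hji, h⟩, And.right⟩

lemma rowStart_le_and_lt_of_Amat_eq_some {n i j s : ℕ} (hjn : j ≤ n) (h : Amat n i j = some s) :
    i < n ∧ rowStart n i ≤ s ∧ s < rowStart n (i + 1) := by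
  obtain ⟨hij, rfl⟩ := (Amat_eq_some_iff hjn).1 h
  rw [rowStart_succ]
  omega

theorem stmt4_general (n : ℕ) (s : ℕ) :
    (s < n * (n + 1) / 2 ↔ ∃ i ≤ n, ∃ j ≤ n, Amat n i j = some s) ∧
    (∀ i₁ j₁ i₂ j₂ : ℕ, i₁ ≤ n → j₁ ≤ n → i₂ ≤ n → j₂ ≤ n →
      Amat n i₁ j₁ = some s → Amat n i₂ j₂ = some s → i₁ = i₂ ∧ j₁ = j₂) := by
  have hmono := rowStart_monotone n
  refine ⟨⟨fun hs => ?_, ?_⟩, ?_⟩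
  · rw [← rowStart_self] at hs
    obtain ⟨i, hin, hi⟩ := hmono.exists_le_lt_succ (Nat.zero_le _) hs
    have hrow := rowStart_succ n i
    refine ⟨i, hin.le, s - rowStart n i + (i + 1), by omega, ?_⟩
    exact (Amat_eq_some_iff (by omega)).2 ⟨by omega, by omega⟩
  · rintro ⟨i, -, j, hjn, h⟩
    obtain ⟨hin, -, hs⟩ := rowStart_le_and_lt_of_Amat_eq_some hjn h
    exact rowStart_self n ▸ hs.trans_le (hmono hin)
  · intro i₁ j₁ i₂ j₂ _ hj₁ _ hj₂ h₁ h₂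
    have hi : i₁ = i₂ := hmono.eq_of_le_lt_succ
      (rowStart_le_and_lt_of_Amat_eq_some hj₁ h₁).2 (rowStart_le_and_lt_of_Amat_eq_some hj₂ h₂).2
    subst hi
    obtain ⟨hij₁, hs₁⟩ := (Amat_eq_some_iff hj₁).1 h₁
    obtain ⟨hij₂, hs₂⟩ := (Amat_eq_some_iff hj₂).1 h₂
    exact ⟨rfl, by omega⟩

/-- The integer entries of the `(n+1) × (n+1)` matrix `A` of procedure 1 are
exactly the integers `0, 1, …, n(n+1)/2 - 1`, each appearing exactly once. -/
theorem stmt4 (n : ℕ) (hn : 0 < n) (s : ℕ) :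
    (s < n * (n + 1) / 2 ↔ ∃ i ≤ n, ∃ j ≤ n, Amat n i j = some s) ∧
    (∀ i₁ j₁ i₂ j₂ : ℕ, i₁ ≤ n → j₁ ≤ n → i₂ ≤ n → j₂ ≤ n →
      Amat n i₁ j₁ = some s → Amat n i₂ j₂ = some s → i₁ = i₂ ∧ j₁ = j₂) :=
  stmt4_general n s
end

section
/- The K × (K/k) matrix P̃₁ obtained from procedure 3 of Algorithm 2 is a k-cyclic 2K/(K-kL+k)-regular (K/k, K, kL, (K-kL)(K-kL+k)/(2k)) placement delivery array. -/
/-!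
Row `i` of `P̃₁` is row `i / k` of `P₁` with its integers shifted by `(i % k) * S₁`. Since the
integers of `P₁` lie in `[0, S₁)`, an integer `s` of `P̃₁` determines both the copy `i % k = s / S₁`
and the original entry `s % S₁`. Hence the PDA conditions, the regularity and the cyclic star
pattern all transfer from `P₁`, with the number of rows, the number of stars per column, the
alphabet and the cyclic shift multiplied by `k`. That the new alphabet size `(K-kL)(K-kL+k)/(2k)`
is exactly `k S₁` comes from writing `K - kL = kn`, so that `(K-kL)(K-kL+k) = k² n (n + 1)`
with `n (n + 1)` even.
-/

open Finset

lemma mul_add_div_two_mul_eq_mul_div_two_mul_sq {k x : ℕ} (hk : 0 < k) (hx : k ∣ x) :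
    x * (x + k) / (2 * k) = k * (x * (x + k) / (2 * k ^ 2)) := by
  obtain ⟨n, rfl⟩ := hx
  obtain ⟨e, he⟩ := Nat.even_mul_succ_self n
  calc k * n * (k * n + k) / (2 * k) = (2 * k) * (k * e) / (2 * k) := by
        congr 1; linear_combination k ^ 2 * he
    _ = k * ((2 * k ^ 2) * e / (2 * k ^ 2)) := by
        rw [Nat.mul_div_cancel_left _ (by positivity), Nat.mul_div_cancel_left _ (by positivity)]
    _ = k * (k * n * (k * n + k) / (2 * k ^ 2)) := by
        congr 2; linear_combination -(k ^ 2 * he)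

lemma Nat.mul_add_div_of_lt {k q t : ℕ} (ht : t < k) : (k * q + t) / k = q := by
  rw [Nat.mul_add_div (by omega), Nat.div_eq_of_lt ht, add_zero]

lemma Nat.mul_add_mod_of_lt' {k q t : ℕ} (ht : t < k) : (k * q + t) % k = t := by
  rw [Nat.mul_add_mod, Nat.mod_eq_of_lt ht]

def rowExpand (k S : ℕ) (Q : ℕ → ℕ → Option ℕ) (i j : ℕ) : Option ℕ :=
  (Q (i / k) j).map (· + i % k * S)

lemma Ptilde1_eq_rowExpand (K k L : ℕ) :
    Ptilde1 K k L = rowExpand k ((K - k * L) * (K - k * L + k) / (2 * k ^ 2))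
      (P1mat ((K - k * L) / k) (K / (K - k * L + k))) :=
  rfl

namespace rowExpand

variable {k S m F Z : ℕ} {Q : ℕ → ℕ → Option ℕ}

lemma eq_none_iff {i j : ℕ} : rowExpand k S Q i j = none ↔ Q (i / k) j = none :=
  Option.map_eq_none_iff

lemma eq_some_of {i j s : ℕ} (hrow : i % k = s / S) (hQ : Q (i / k) j = some (s % S)) :
    rowExpand k S Q i j = some s := by
  rw [rowExpand, hQ, Option.map_some, hrow, Nat.mod_add_div']

lemma eq_some_iff {i j s : ℕ} (hQ : ∀ u, Q (i / k) j = some u → u < S) :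
    rowExpand k S Q i j = some s ↔ i % k = s / S ∧ Q (i / k) j = some (s % S) := by
  refine ⟨fun h => ?_, fun h => eq_some_of h.1 h.2⟩
  obtain ⟨u, hu, rfl⟩ := Option.map_eq_some_iff.mp h
  have huS := hQ u hu
  refine ⟨?_, ?_⟩
  · rw [Nat.add_mul_div_right _ _ (by omega), Nat.div_eq_of_lt huS, zero_add]
  · rwa [Nat.add_mul_mod_self_right, Nat.mod_eq_of_lt huS]

lemma card_filter_range_mul (hk : 0 < k) (p : ℕ → Prop) [DecidablePred p] :
    ((range (k * F)).filter (fun i => p (i / k))).card = k * ((range F).filter p).card := by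
  have h : ((range (k * F)).filter (fun i => p (i / k))).card
      = (range k ×ˢ (range F).filter p).card := by
    apply card_nbij' (fun i => (i % k, i / k)) (fun q => k * q.2 + q.1)
    · intro i hi
      simp only [mem_coe, mem_filter, mem_product, mem_range] at hi ⊢
      exact ⟨Nat.mod_lt i hk, Nat.div_lt_of_lt_mul hi.1, hi.2⟩
    · intro q hq
      simp only [mem_coe, mem_filter, mem_product, mem_range] at hq ⊢
      rw [Nat.mul_add_div_of_lt hq.1]
      exact ⟨by nlinarith [hq.1, hq.2.1], hq.2.2⟩
    · intro i _
      simp only [Nat.div_add_mod]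
    · intro q hq
      simp only [mem_coe, mem_product, mem_range] at hq
      simp only [Nat.mul_add_div_of_lt hq.1, Nat.mul_add_mod_of_lt' hq.1]
  rw [h, card_product, card_range]

lemma card_filter_eq_none (hk : 0 < k)
    (hQ : ∀ j < m, ((range F).filter (fun i => Q i j = none)).card = Z) :
    ∀ j < m, ((range (k * F)).filter (fun i => rowExpand k S Q i j = none)).card = k * Z := by
  intro j hj
  simp only [eq_none_iff]
  rw [card_filter_range_mul hk (fun q => Q q j = none), hQ j hj]

lemma lt_of_eq_some (hk : 0 < k)
    (hQ : ∀ i < F, ∀ j < m, ∀ s, Q i j = some s → 0 ≤ s ∧ s < S) :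
    ∀ i < k * F, ∀ j < m, ∀ s, rowExpand k S Q i j = some s → 0 ≤ s ∧ s < k * S := by
  intro i hi j hj s hs
  obtain ⟨u, hu, rfl⟩ := Option.map_eq_some_iff.mp hs
  have huS := (hQ _ (Nat.div_lt_of_lt_mul hi) j hj u hu).2
  have hik := Nat.mod_lt i hk
  exact ⟨Nat.zero_le _, by nlinarith⟩

lemma exists_eq_some (hQ : ∀ s, 0 ≤ s → s < S → ∃ i < F, ∃ j < m, Q i j = some s) :
    ∀ s, 0 ≤ s → s < k * S → ∃ i < k * F, ∃ j < m, rowExpand k S Q i j = some s := by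
  intro s _ hs
  have hS : 0 < S := Nat.pos_of_ne_zero (by rintro rfl; simp at hs)
  have ht : s / S < k := Nat.div_lt_of_lt_mul (by rwa [mul_comm])
  obtain ⟨q, hq, j, hj, hQs⟩ := hQ (s % S) (Nat.zero_le _) (Nat.mod_lt s hS)
  refine ⟨k * q + s / S, by nlinarith, j, hj, eq_some_of ?_ ?_⟩
  · rw [Nat.mul_add_mod_of_lt' ht]
  · rwa [Nat.mul_add_div_of_lt ht]

lemma cross_eq_none_of_eq_some
    (hbound : ∀ i < F, ∀ j < m, ∀ s, Q i j = some s → 0 ≤ s ∧ s < S)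
    (hQ : ∀ i₁ j₁ i₂ j₂ s, i₁ < F → j₁ < m → i₂ < F → j₂ < m →
      Q i₁ j₁ = some s → Q i₂ j₂ = some s → (i₁, j₁) ≠ (i₂, j₂) →
      i₁ ≠ i₂ ∧ j₁ ≠ j₂ ∧ Q i₁ j₂ = none ∧ Q i₂ j₁ = none) :
    ∀ i₁ j₁ i₂ j₂ s, i₁ < k * F → j₁ < m → i₂ < k * F → j₂ < m →
      rowExpand k S Q i₁ j₁ = some s → rowExpand k S Q i₂ j₂ = some s →
      (i₁, j₁) ≠ (i₂, j₂) → i₁ ≠ i₂ ∧ j₁ ≠ j₂ ∧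
        rowExpand k S Q i₁ j₂ = none ∧ rowExpand k S Q i₂ j₁ = none := by
  intro i₁ j₁ i₂ j₂ s h₁ hj₁ h₂ hj₂ e₁ e₂ hne
  have hq₁ := Nat.div_lt_of_lt_mul h₁
  have hq₂ := Nat.div_lt_of_lt_mul h₂
  rw [eq_some_iff (fun u hu => (hbound _ hq₁ _ hj₁ u hu).2)] at e₁
  rw [eq_some_iff (fun u hu => (hbound _ hq₂ _ hj₂ u hu).2)] at e₂
  have hrow : i₁ / k = i₂ / k → i₁ = i₂ := fun hq => by
    rw [← Nat.div_add_mod i₁ k, ← Nat.div_add_mod i₂ k, hq, e₁.1, e₂.1]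
  obtain ⟨hqne, hjne, hn₁, hn₂⟩ := hQ _ _ _ _ _ hq₁ hj₁ hq₂ hj₂ e₁.2 e₂.2
    fun h => hne (Prod.ext (hrow (Prod.ext_iff.mp h).1) (Prod.ext_iff.mp h).2)
  exact ⟨fun h => hqne (h ▸ rfl), hjne, eq_none_iff.mpr hn₁, eq_none_iff.mpr hn₂⟩

end rowExpand

open rowExpand

variable {k S m F Z : ℕ} {Q : ℕ → ℕ → Option ℕ}

lemma isPDA_rowExpand (hk : 0 < k) (hQ : isPDA m F Z S Q) :
    isPDA m (k * F) (k * Z) (k * S) (rowExpand k S Q) :=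
  ⟨card_filter_eq_none hk hQ.1, lt_of_eq_some hk hQ.2.1, exists_eq_some hQ.2.2.1,
    cross_eq_none_of_eq_some hQ.2.1 hQ.2.2.2⟩

lemma isRegularGen_rowExpand {g : ℕ}
    (hbound : ∀ i < F, ∀ j < m, ∀ s, Q i j = some s → 0 ≤ s ∧ s < S)
    (hreg : isRegularGen g m F 0 S Q) :
    isRegularGen g m (k * F) 0 (k * S) (rowExpand k S Q) := by
  intro s _ hs
  have hS : 0 < S := Nat.pos_of_ne_zero (by rintro rfl; simp at hs)
  have ht : s / S < k := Nat.div_lt_of_lt_mul (by rwa [mul_comm])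
  have hdecode : ∀ i < k * F, ∀ j < m,
      (rowExpand k S Q i j = some s ↔ i % k = s / S ∧ Q (i / k) j = some (s % S)) :=
    fun i hi j hj => eq_some_iff (fun u hu => (hbound _ (Nat.div_lt_of_lt_mul hi) j hj u hu).2)
  rw [← hreg (s % S) (Nat.zero_le _) (Nat.mod_lt s hS)]
  apply card_nbij' (fun p => (p.1 / k, p.2)) (fun q => (k * q.1 + s / S, q.2))
  · rintro ⟨i, j⟩ hp
    simp only [mem_coe, mem_filter, mem_product, mem_range] at hp ⊢
    exact ⟨⟨Nat.div_lt_of_lt_mul hp.1.1, hp.1.2⟩, ((hdecode i hp.1.1 j hp.1.2).mp hp.2).2⟩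
  · rintro ⟨q, j⟩ hq
    simp only [mem_coe, mem_filter, mem_product, mem_range] at hq ⊢
    refine ⟨⟨by nlinarith [hq.1.1], hq.1.2⟩, eq_some_of ?_ ?_⟩
    · rw [Nat.mul_add_mod_of_lt' ht]
    · rw [Nat.mul_add_div_of_lt ht]; exact hq.2
  · rintro ⟨i, j⟩ hp
    simp only [mem_coe, mem_filter, mem_product, mem_range] at hp
    dsimp only
    rw [← ((hdecode i hp.1.1 j hp.1.2).mp hp.2).1, Nat.div_add_mod]
  · rintro ⟨q, j⟩ _
    simp only [Nat.mul_add_div_of_lt ht]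

lemma isCyclic_rowExpand (hk : 0 < k) {t : ℕ} (hQ : isCyclic t m F Z Q) :
    isCyclic (k * t) m (k * F) (k * Z) (rowExpand k S Q) := by
  obtain ⟨start, hstars, hshift⟩ := hQ
  refine ⟨fun j => k * start j, fun j hj i hi => ?_, fun j hj => ?_⟩
  · have hik := Nat.mod_lt i hk
    rw [eq_none_iff, hstars j hj _ (Nat.div_lt_of_lt_mul hi)]
    constructor
    · rintro ⟨r, hr, hq⟩
      refine ⟨k * r + i % k, by nlinarith, ?_⟩
      rw [show k * start j + (k * r + i % k) = k * (start j + r) + i % k by ring, Nat.mod_mul,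
        Nat.mul_add_mod_of_lt' hik, Nat.mul_add_div_of_lt hik, ← hq, Nat.mod_add_div]
    · rintro ⟨r, hr, rfl⟩
      have hrk := Nat.mod_lt r hk
      refine ⟨r / k, Nat.div_lt_of_lt_mul hr, ?_⟩
      rw [show k * start j + r = k * (start j + r / k) + r % k by
          rw [mul_add, add_assoc, Nat.div_add_mod],
        Nat.mod_mul, Nat.mul_add_mod_of_lt' hrk, Nat.mul_add_div_of_lt hrk, add_comm,
        Nat.mul_add_div_of_lt hrk]
  · dsimp only
    rw [← mul_add, Nat.mul_mod_mul_left, Nat.mul_mod_mul_left, hshift j hj]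

theorem stmt10_general (K k L : ℕ) (hk : 0 < k)
    (hdk : k ∣ K)
    (hP1 : isPDA (K / k) (K / k) L ((K - k * L) * (K - k * L + k) / (2 * k ^ 2))
      (P1mat ((K - k * L) / k) (K / (K - k * L + k))))
    (hP1reg : isRegularGen (2 * K / (K - k * L + k)) (K / k) (K / k) 0
      ((K - k * L) * (K - k * L + k) / (2 * k ^ 2))
      (P1mat ((K - k * L) / k) (K / (K - k * L + k))))
    (hP1cyc : isCyclic 1 (K / k) (K / k) L
      (P1mat ((K - k * L) / k) (K / (K - k * L + k)))) :
    isPDA (K / k) K (k * L) ((K - k * L) * (K - k * L + k) / (2 * k))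
      (Ptilde1 K k L) ∧
    isRegularGen (2 * K / (K - k * L + k)) (K / k) K 0
      ((K - k * L) * (K - k * L + k) / (2 * k)) (Ptilde1 K k L) ∧
    isCyclic k (K / k) K (k * L) (Ptilde1 K k L) := by
  have hrows : k * (K / k) = K := Nat.mul_div_cancel' hdk
  rw [mul_add_div_two_mul_eq_mul_div_two_mul_sq hk (Nat.dvd_sub hdk (dvd_mul_right k L)),
    Ptilde1_eq_rowExpand]
  refine ⟨?_, ?_, ?_⟩
  · simpa only [hrows] using isPDA_rowExpand hk hP1
  · simpa only [hrows] using isRegularGen_rowExpand (k := k) hP1.2.1 hP1reg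
  · simpa only [hrows, mul_one] using isCyclic_rowExpand
      (S := (K - k * L) * (K - k * L + k) / (2 * k ^ 2)) hk hP1cyc

/-- The `K × (K/k)` matrix `P̃₁` obtained from procedure 3 of Algorithm 2 is a
`k`-cyclic `2K/(K-kL+k)`-regular `(K/k, K, kL, (K-kL)(K-kL+k)/(2k))` PDA,
given that `P₁` is a 1-cyclic `2K/(K-kL+k)`-regular
`(K/k, K/k, L, (K-kL)(K-kL+k)/(2k²))` PDA. -/
theorem stmt10 (K k L : ℕ) (hk : 0 < k) (hL : 0 < L) (hKL : k * L < K)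
    (hdk : k ∣ K) (hdv : (K - k * L + k) ∣ K)
    (hb : 2 ≤ K / (K - k * L + k))
    (hP1 : isPDA (K / k) (K / k) L ((K - k * L) * (K - k * L + k) / (2 * k ^ 2))
      (P1mat ((K - k * L) / k) (K / (K - k * L + k))))
    (hP1reg : isRegularGen (2 * K / (K - k * L + k)) (K / k) (K / k) 0
      ((K - k * L) * (K - k * L + k) / (2 * k ^ 2))
      (P1mat ((K - k * L) / k) (K / (K - k * L + k))))
    (hP1cyc : isCyclic 1 (K / k) (K / k) L
      (P1mat ((K - k * L) / k) (K / (K - k * L + k)))) :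
    isPDA (K / k) K (k * L) ((K - k * L) * (K - k * L + k) / (2 * k))
      (Ptilde1 K k L) ∧
    isRegularGen (2 * K / (K - k * L + k)) (K / k) K 0
      ((K - k * L) * (K - k * L + k) / (2 * k)) (Ptilde1 K k L) ∧
    isCyclic k (K / k) K (k * L) (Ptilde1 K k L) :=
  stmt10_general K k L hk hdk hP1 hP1reg hP1cyc
end

section
/- If P̃₁ is a k-cyclic g-regular (K/k, K, kL, S̃₁) PDA, then for each t ∈ [2,k] the matrix P̃ₜ = P̃₁ + (t-1)S̃₁ (add (t-1)S̃₁ to each integer entry, stars unchanged) is a k-cyclic g-regular PDA on the integer alphabet [(t-1)S̃₁, tS̃₁), and the K×K concatenation P = [P̃₁ P̃₂ ... P̃ₖ] is a k-cyclic g-regular (K, K, kL, kS̃₁) PDA. -/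
/-!
Adding a constant `c` to every integer entry of an array moves its alphabet from `[lo, hi)` to
`[lo + c, hi + c)` and leaves the star pattern untouched, so all PDA properties carry over.
Write `q = K / k`. Column `j` of `P` is column `j % q` of `P̃₁` shifted by `(j / q) S̃₁`; since
the entries of `P̃₁` lie in `[0, S̃₁)`, an entry `s` of `P` determines both the entry `s % S̃₁` of
`P̃₁` and the block `s / S̃₁` it came from, which reduces every property of `P` to that of `P̃₁`.
For cyclicity, the stars of column `j < q` of `P̃₁` start at row `s₀ + j k` modulo `K`; since
`q k = K`, this formula stays valid for every column of `P` across the block boundaries.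
-/

lemma Option.map_add_eq_some_iff {o : Option ℕ} {c s : ℕ} (h : c ≤ s) :
    o.map (· + c) = some s ↔ o = some (s - c) := by
  cases o <;> simp only [Option.map_none, Option.map_some, reduceCtorEq, Option.some.injEq]
  omega

section Shift

variable {Kc F Z lo hi : ℕ} {P : ℕ → ℕ → Option ℕ}

lemma isPDAgen.map_add (hP : isPDAgen Kc F Z lo hi P) (c : ℕ) :
    isPDAgen Kc F Z (lo + c) (hi + c) (fun i j => (P i j).map (· + c)) := by
  obtain ⟨hC1, hRange, hC2, hC3⟩ := hP
  refine ⟨?_, ?_, ?_, ?_⟩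
  · simpa only [Option.map_eq_none_iff] using hC1
  · intro i hi j hj s hs
    obtain ⟨a, ha, rfl⟩ := Option.map_eq_some_iff.mp hs
    have := hRange i hi j hj a ha
    omega
  · intro s hlo hhi
    obtain ⟨i, hi, j, hj, hs⟩ := hC2 (s - c) (by omega) (by omega)
    exact ⟨i, hi, j, hj, (Option.map_add_eq_some_iff (by omega)).mpr hs⟩
  · intro i₁ j₁ i₂ j₂ s hi₁ hj₁ hi₂ hj₂ h₁ h₂ hne
    obtain ⟨a, ha, rfl⟩ := Option.map_eq_some_iff.mp h₁
    obtain ⟨b, hb, hab⟩ := Option.map_eq_some_iff.mp h₂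
    obtain rfl : b = a := by omega
    obtain ⟨hi, hj, h₁₂, h₂₁⟩ := hC3 i₁ j₁ i₂ j₂ b hi₁ hj₁ hi₂ hj₂ ha hb hne
    simp [hi, hj, h₁₂, h₂₁]

lemma isRegularGen.map_add {g : ℕ} (hReg : isRegularGen g Kc F lo hi P) (c : ℕ) :
    isRegularGen g Kc F (lo + c) (hi + c) (fun i j => (P i j).map (· + c)) := by
  intro s hlo hhi
  simp only [Option.map_add_eq_some_iff (show c ≤ s by omega)]
  exact hReg (s - c) (by omega) (by omega)

lemma isCyclic.map {t : ℕ} (hCyc : isCyclic t Kc F Z P) (f : ℕ → ℕ) :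
    isCyclic t Kc F Z (fun i j => (P i j).map f) := by
  simpa only [isCyclic, Option.map_eq_none_iff] using hCyc

end Shift

/-- The concatenation `[P, P + S, P + 2S, …]` of blocks `q` columns wide. -/
def hconcat (q S : ℕ) (P : ℕ → ℕ → Option ℕ) : ℕ → ℕ → Option ℕ :=
  fun i j => (P i (j % q)).map (fun s => s + j / q * S)

section Concat

variable {q S F Z : ℕ} {P : ℕ → ℕ → Option ℕ}

lemma hconcat_eq_none_iff {i j : ℕ} : hconcat q S P i j = none ↔ P i (j % q) = none :=
  Option.map_eq_none_iff

lemma hconcat_add_mul {i j T : ℕ} (hj : j < q) :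
    hconcat q S P i (j + T * q) = (P i j).map (· + T * S) := by
  have hq : 0 < q := by omega
  rw [hconcat, Nat.add_mul_mod_self_right, Nat.mod_eq_of_lt hj, Nat.add_mul_div_right _ _ hq,
    Nat.div_eq_of_lt hj, zero_add]

lemma hconcat_eq_some_iff {i j s : ℕ} (hlt : ∀ a, P i (j % q) = some a → a < S) :
    hconcat q S P i j = some s ↔ P i (j % q) = some (s % S) ∧ j / q = s / S := by
  unfold hconcat
  cases h : P i (j % q) with
  | none => simp
  | some a =>
    have ha := hlt a h
    rw [Option.map_some, Option.some_inj, Option.some_inj, eq_comm (a := a), and_comm,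
      eq_comm (a := j / q), Nat.div_mod_unique (show 0 < S by omega), mul_comm S]
    simp [ha]

lemma isPDA.hconcat (hP : isPDA q F Z S P) (m : ℕ) :
    isPDA (m * q) F Z (m * S) (hconcat q S P) := by
  obtain ⟨hC1, hRange, hC2, hC3⟩ := hP
  have hmod : ∀ {j}, j < m * q → j % q < q := fun hj => Nat.mod_lt _ (Nat.pos_of_lt_mul_left hj)
  have hlt : ∀ {i j}, i < F → j < m * q → ∀ a, P i (j % q) = some a → a < S :=
    fun hi hj a ha => (hRange _ hi _ (hmod hj) a ha).2
  refine ⟨?_, ?_, ?_, ?_⟩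
  · intro j hj
    simpa only [hconcat_eq_none_iff] using hC1 (j % q) (hmod hj)
  · intro i hi j hj s hs
    obtain ⟨hs, hjs⟩ := (hconcat_eq_some_iff (hlt hi hj)).mp hs
    have hS : 0 < S := by have := hlt hi hj _ hs; omega
    refine ⟨Nat.zero_le _, ?_⟩
    rwa [← Nat.div_lt_iff_lt_mul hS, ← hjs, Nat.div_lt_iff_lt_mul (Nat.pos_of_lt_mul_left hj)]
  · intro s _ hs
    have hS : 0 < S := Nat.pos_of_lt_mul_left hs
    obtain ⟨i, hi, j, hj, hij⟩ := hC2 (s % S) (Nat.zero_le _) (Nat.mod_lt _ hS)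
    have hT : s / S < m := (Nat.div_lt_iff_lt_mul hS).mpr hs
    refine ⟨i, hi, j + s / S * q, by nlinarith, ?_⟩
    rw [hconcat_add_mul hj, hij, Option.map_some, Nat.mod_add_div']
  · intro i₁ j₁ i₂ j₂ s hi₁ hj₁ hi₂ hj₂ h₁ h₂ hne
    obtain ⟨h₁, hd₁⟩ := (hconcat_eq_some_iff (hlt hi₁ hj₁)).mp h₁
    obtain ⟨h₂, hd₂⟩ := (hconcat_eq_some_iff (hlt hi₂ hj₂)).mp h₂
    have hne' : (i₁, j₁ % q) ≠ (i₂, j₂ % q) := by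
      intro h
      obtain ⟨hi, hmod⟩ := Prod.mk.inj h
      refine hne (Prod.ext hi ?_)
      rw [← Nat.mod_add_div' j₁ q, ← Nat.mod_add_div' j₂ q, hmod, hd₁, hd₂]
    obtain ⟨hi, hj, h₁₂, h₂₁⟩ := hC3 _ _ _ _ _ hi₁ (hmod hj₁) hi₂ (hmod hj₂) h₁ h₂ hne'
    refine ⟨hi, fun h => hj (h ▸ rfl), ?_, ?_⟩ <;> rwa [hconcat_eq_none_iff]

lemma isRegularGen.hconcat {g : ℕ} (hReg : isRegularGen g q F 0 S P)
    (hlt : ∀ i < F, ∀ j < q, ∀ a, P i j = some a → a < S) (m : ℕ) :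
    isRegularGen g (m * q) F 0 (m * S) (hconcat q S P) := by
  intro s _ hs
  have hS : 0 < S := Nat.pos_of_lt_mul_left hs
  have hT : s / S < m := (Nat.div_lt_iff_lt_mul hS).mpr hs
  rw [← hReg (s % S) (Nat.zero_le _) (Nat.mod_lt _ hS)]
  apply Finset.card_nbij' (fun p => (p.1, p.2 % q)) (fun p => (p.1, p.2 + s / S * q))
  · rintro ⟨i, j⟩ hp
    simp only [Finset.coe_filter, Finset.mem_product, Finset.mem_range, Set.mem_ofPred_eq] at hp ⊢
    obtain ⟨⟨hi, hj⟩, hij⟩ := hp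
    have hjq := Nat.mod_lt j (Nat.pos_of_lt_mul_left hj)
    exact ⟨⟨hi, hjq⟩, ((hconcat_eq_some_iff (hlt i hi _ hjq)).mp hij).1⟩
  · rintro ⟨i, j⟩ hp
    simp only [Finset.coe_filter, Finset.mem_product, Finset.mem_range, Set.mem_ofPred_eq] at hp ⊢
    obtain ⟨⟨hi, hj⟩, hij⟩ := hp
    refine ⟨⟨hi, by nlinarith⟩, ?_⟩
    rw [hconcat_add_mul hj, hij, Option.map_some, Nat.mod_add_div']
  · rintro ⟨i, j⟩ hp
    simp only [Finset.coe_filter, Finset.mem_product, Finset.mem_range, Set.mem_ofPred_eq] at hp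
    obtain ⟨⟨hi, hj⟩, hij⟩ := hp
    have hjs := ((hconcat_eq_some_iff
      (hlt i hi _ (Nat.mod_lt j (Nat.pos_of_lt_mul_left hj)))).mp hij).2
    simp only [← hjs, Nat.mod_add_div']
  · rintro ⟨i, j⟩ hp
    simp only [Finset.coe_filter, Finset.mem_product, Finset.mem_range, Set.mem_ofPred_eq] at hp
    simp [Nat.add_mul_mod_self_right, Nat.mod_eq_of_lt hp.1.2]

lemma start_modEq_of_step {F t q : ℕ} {st : ℕ → ℕ}
    (hstep : ∀ j, j + 1 < q → st (j + 1) % F = (st j + t) % F) :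
    ∀ n < q, st n ≡ st 0 + n * t [MOD F]
  | 0, _ => by simp [Nat.ModEq.refl]
  | n + 1, hn =>
    calc st (n + 1) ≡ st n + t [MOD F] := hstep n hn
      _ ≡ st 0 + n * t + t [MOD F] := (start_modEq_of_step hstep n (by omega)).add_right t
      _ = st 0 + (n + 1) * t := by ring

lemma isCyclic.hconcat {t : ℕ} (hCyc : isCyclic t q F Z P) (hF : F ∣ q * t) (m : ℕ) :
    isCyclic t (m * q) F Z (hconcat q S P) := by
  obtain ⟨st, hstar, hstep⟩ := hCyc
  have hstart : ∀ j, 0 < q → st (j % q) ≡ st 0 + j * t [MOD F] := by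
    intro j hq
    have hblock : 0 ≡ j / q * (q * t) [MOD F] :=
      (Nat.modEq_zero_iff_dvd.mpr (dvd_mul_of_dvd_right hF _)).symm
    calc st (j % q) ≡ st 0 + j % q * t [MOD F] := start_modEq_of_step hstep _ (Nat.mod_lt _ hq)
      _ ≡ st 0 + j % q * t + j / q * (q * t) [MOD F] := hblock.add_left _
      _ = st 0 + (j % q + j / q * q) * t := by ring
      _ = st 0 + j * t := by rw [Nat.mod_add_div']
  refine ⟨fun j => st (j % q), fun j hj i hi => ?_, fun j hj => ?_⟩
  · rw [hconcat_eq_none_iff]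
    exact hstar _ (Nat.mod_lt _ (Nat.pos_of_lt_mul_left hj)) i hi
  · have hq := Nat.pos_of_lt_mul_left hj
    calc st ((j + 1) % q) ≡ st 0 + (j + 1) * t [MOD F] := hstart _ hq
      _ = st 0 + j * t + t := by ring
      _ ≡ st (j % q) + t [MOD F] := ((hstart j hq).add_right t).symm

end Concat

theorem stmt11_general (K k L g S1 : ℕ) (Pt : ℕ → ℕ → Option ℕ)
    (hdk : k ∣ K)
    (hP : isPDA (K / k) K (k * L) S1 Pt)
    (hReg : isRegularGen g (K / k) K 0 S1 Pt)
    (hCyc : isCyclic k (K / k) K (k * L) Pt) :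
    (∀ t : ℕ, 2 ≤ t → t ≤ k →
      isPDAgen (K / k) K (k * L) ((t - 1) * S1) (t * S1)
        (fun i j => (Pt i j).map (fun s => s + (t - 1) * S1)) ∧
      isRegularGen g (K / k) K ((t - 1) * S1) (t * S1)
        (fun i j => (Pt i j).map (fun s => s + (t - 1) * S1)) ∧
      isCyclic k (K / k) K (k * L)
        (fun i j => (Pt i j).map (fun s => s + (t - 1) * S1))) ∧
    isPDA K K (k * L) (k * S1)
      (fun i j => (Pt i (j % (K / k))).map (fun s => s + (j / (K / k)) * S1)) ∧
    isRegularGen g K K 0 (k * S1)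
      (fun i j => (Pt i (j % (K / k))).map (fun s => s + (j / (K / k)) * S1)) ∧
    isCyclic k K K (k * L)
      (fun i j => (Pt i (j % (K / k))).map (fun s => s + (j / (K / k)) * S1)) := by
  have hcols : k * (K / k) = K := Nat.mul_div_cancel' hdk
  refine ⟨fun t ht _ => ?_, ?_, ?_, ?_⟩
  · have hlo : 0 + (t - 1) * S1 = (t - 1) * S1 := zero_add _
    have hhi : S1 + (t - 1) * S1 = t * S1 := by
      obtain ⟨u, rfl⟩ : ∃ u, t = u + 1 := ⟨t - 1, by omega⟩
      rw [Nat.add_sub_cancel]; ring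
    refine ⟨?_, ?_, hCyc.map _⟩
    · simpa only [hlo, hhi] using isPDAgen.map_add hP ((t - 1) * S1)
    · simpa only [hlo, hhi] using hReg.map_add ((t - 1) * S1)
  · have := hP.hconcat k
    rwa [hcols] at this
  · have := hReg.hconcat (fun i hi j hj a ha => (hP.2.1 i hi j hj a ha).2) k
    rwa [hcols] at this
  · have := hCyc.hconcat (S := S1) (by rw [mul_comm, hcols]) k
    rwa [hcols] at this

/-- If `P̃₁` is a `k`-cyclic `g`-regular `(K/k, K, kL, S̃₁)` PDA, then each
shifted matrix `P̃ₜ = P̃₁ + (t-1)S̃₁` (for `t ∈ [2, k]`) is a `k`-cyclic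
`g`-regular PDA on the integer alphabet `[(t-1)S̃₁, tS̃₁)`, and the `K × K`
concatenation `P = [P̃₁ P̃₂ … P̃ₖ]` is a `k`-cyclic `g`-regular
`(K, K, kL, kS̃₁)` PDA. -/
theorem stmt11 (K k L g S1 : ℕ) (Pt : ℕ → ℕ → Option ℕ)
    (hK : 0 < K) (hk : 0 < k) (hL : 0 < L)
    (hdk : k ∣ K) (hdv : (K - k * L + k) ∣ K) (hKL : k * L < K)
    (hP : isPDA (K / k) K (k * L) S1 Pt)
    (hReg : isRegularGen g (K / k) K 0 S1 Pt)
    (hCyc : isCyclic k (K / k) K (k * L) Pt) :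
    (∀ t : ℕ, 2 ≤ t → t ≤ k →
      isPDAgen (K / k) K (k * L) ((t - 1) * S1) (t * S1)
        (fun i j => (Pt i j).map (fun s => s + (t - 1) * S1)) ∧
      isRegularGen g (K / k) K ((t - 1) * S1) (t * S1)
        (fun i j => (Pt i j).map (fun s => s + (t - 1) * S1)) ∧
      isCyclic k (K / k) K (k * L)
        (fun i j => (Pt i j).map (fun s => s + (t - 1) * S1))) ∧
    isPDA K K (k * L) (k * S1)
      (fun i j => (Pt i (j % (K / k))).map (fun s => s + (j / (K / k)) * S1)) ∧
    isRegularGen g K K 0 (k * S1)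
      (fun i j => (Pt i (j % (K / k))).map (fun s => s + (j / (K / k)) * S1)) ∧
    isCyclic k K K (k * L)
      (fun i j => (Pt i (j % (K / k))).map (fun s => s + (j / (K / k)) * S1)) :=
  stmt11_general K k L g S1 Pt hdk hP hReg hCyc
end
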